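/- Let β > 0, ω > 0 and μ < ω be real numbers. Then 1/(exp(β(ω−μ)) + 1) = ∫₀^∞ h_f(t, βμ) · exp(−t β² ω²) dt, where h_f(t,a) = (4π)^{-1/2} t^{-3/2} Σ_{k=1}^∞ (−1)^{k+1} k · exp(−k²/(4t) + k·a). -/

import Mathlib

open MeasureTheory Set Real


lemma aux_deriv_sub (c : ℝ) (u : ℝ) (hu : u ≠ 0) :
    HasDerivAt (fun y : ℝ => y - c/y) (1 + c/u^2) u := by
  have h2 := (hasDerivAt_id u).sub ((hasDerivAt_inv hu).const_mul c)
  have e1 : (fun y : ℝ => y - c/y) = fun y : ℝ => id y - c * y⁻¹ := by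
    funext y; simp [div_eq_mul_inv]
  rw [e1]; exact h2.congr_deriv (by rw [div_eq_mul_inv]; ring)

lemma aux_deriv_div (c : ℝ) (u : ℝ) (hu : u ≠ 0) :
    HasDerivAt (fun y : ℝ => c/y) (-(c/u^2)) u := by
  have h2 := (hasDerivAt_inv hu).const_mul c
  have e1 : (fun y : ℝ => c/y) = fun y : ℝ => c * y⁻¹ := by
    funext y; simp [div_eq_mul_inv]
  rw [e1]; exact h2.congr_deriv (by rw [div_eq_mul_inv]; ring)

lemma image_sub (c : ℝ) (hc : 0 < c) : (fun u : ℝ => u - c/u) '' Ioi 0 = univ := by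
  ext y
  simp only [Set.mem_image, Set.mem_univ, iff_true, Set.mem_Ioi]
  set s := Real.sqrt (y^2 + 4*c) with hs
  have hs2 : s^2 = y^2 + 4*c := Real.sq_sqrt (by positivity)
  have hs0 : 0 ≤ s := Real.sqrt_nonneg _
  have hupos : 0 < (y + s)/2 := by nlinarith [sq_nonneg (s+y), sq_nonneg (s-y)]
  refine ⟨(y+s)/2, hupos, ?_⟩
  have hcc : c/((y+s)/2) = (y+s)/2 - y := by
    rw [div_eq_iff (ne_of_gt hupos)]; nlinarith
  simp only [hcc]; ring

lemma image_div (c : ℝ) (hc : 0 < c) : (fun u : ℝ => c/u) '' Ioi 0 = Ioi 0 := by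
  ext y
  simp only [Set.mem_image, Set.mem_Ioi]
  constructor
  · rintro ⟨u, hu, rfl⟩; exact div_pos hc hu
  · intro hy; exact ⟨c/y, div_pos hc hy, by field_simp⟩

lemma inj_sub (c : ℝ) (hc : 0 < c) : Set.InjOn (fun u : ℝ => u - c/u) (Ioi 0) := by
  apply StrictMonoOn.injOn
  intro a ha b hb hab
  simp only [Set.mem_Ioi] at ha hb
  have h : c/b < c/a := by gcongr
  simp only
  linarith

lemma inj_div (c : ℝ) (hc : 0 < c) : Set.InjOn (fun u : ℝ => c/u) (Ioi 0) := by
  intro a ha b hb h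
  simp only [Set.mem_Ioi] at ha hb
  simp only at h
  field_simp at h
  exact h.symm

lemma glasser (c : ℝ) (hc : 0 < c) :
    IntegrableOn (fun u : ℝ => Real.exp (-(u^2 + c^2/u^2))) (Ioi 0) volume ∧
    ∫ u in Ioi (0:ℝ), Real.exp (-(u^2 + c^2/u^2))
      = Real.sqrt Real.pi / 2 * Real.exp (-(2*c)) := by
  set f : ℝ → ℝ := fun u => u - c/u with hf
  have hfd : ∀ x ∈ Ioi (0:ℝ), HasDerivWithinAt f (1 + c/x^2) (Ioi 0) x := fun x hx =>
    (aux_deriv_sub c x (ne_of_gt hx)).hasDerivWithinAt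
  have hgd : ∀ x ∈ Ioi (0:ℝ), HasDerivWithinAt (fun u : ℝ => c/u) (-(c/x^2)) (Ioi 0) x :=
    fun x hx => (aux_deriv_div c x (ne_of_gt hx)).hasDerivWithinAt
  -- total integral via substitution f
  have key : ∫ x in f '' Ioi 0, Real.exp (-x^2)
      = ∫ u in Ioi (0:ℝ), |1 + c/u^2| • Real.exp (-(f u)^2) :=
    integral_image_eq_integral_abs_deriv_smul measurableSet_Ioi hfd (inj_sub c hc) _
  rw [image_sub c hc] at key
  have hgauss : ∫ x in (univ : Set ℝ), Real.exp (-x^2) = Real.sqrt Real.pi := by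
    rw [Measure.restrict_univ]
    have := integral_gaussian 1
    simpa using this
  -- integrability of the substituted integrand
  have hint : IntegrableOn (fun u : ℝ => |1 + c/u^2| • Real.exp (-(f u)^2)) (Ioi 0) volume := by
    refine (integrableOn_image_iff_integrableOn_abs_deriv_smul measurableSet_Ioi hfd
      (inj_sub c hc) (fun x => Real.exp (-x^2))).mp ?_
    rw [image_sub c hc]
    have : Integrable (fun x : ℝ => Real.exp (-x^2)) := by
      have := integrable_exp_neg_mul_sq (one_pos)
      simpa using this
    exact this.integrableOn
  -- replace |·| on Ioi 0
  have habs : ∀ u ∈ Ioi (0:ℝ), |1 + c/u^2| • Real.exp (-(f u)^2)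
      = (1 + c/u^2) * Real.exp (-(f u)^2) := by
    intro u hu
    rw [smul_eq_mul, abs_of_pos (by positivity)]
  have hint' : IntegrableOn (fun u : ℝ => (1 + c/u^2) * Real.exp (-(f u)^2)) (Ioi 0) volume :=
    hint.congr_fun habs measurableSet_Ioi
  have key' : Real.sqrt Real.pi = ∫ u in Ioi (0:ℝ), (1 + c/u^2) * Real.exp (-(f u)^2) := by
    rw [← hgauss, key]
    exact setIntegral_congr_fun measurableSet_Ioi habs
  -- integrability of each piece
  have hmeas : Measurable (fun u : ℝ => Real.exp (-(f u)^2)) := by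
    apply Real.measurable_exp.comp
    apply Measurable.neg
    apply Measurable.pow _ measurable_const
    exact measurable_id.sub ((measurable_const.div measurable_id))
  have hI1 : IntegrableOn (fun u : ℝ => Real.exp (-(f u)^2)) (Ioi 0) volume := by
    apply Integrable.mono' hint' hmeas.aestronglyMeasurable.restrict
    filter_upwards [ae_restrict_mem measurableSet_Ioi] with u hu
    rw [Real.norm_eq_abs, abs_of_pos (Real.exp_pos _)]
    nlinarith [Real.exp_pos (-(f u)^2), div_nonneg hc.le (sq_nonneg u),
      mul_le_mul_of_nonneg_right (le_add_of_nonneg_right (div_nonneg hc.le (sq_nonneg u)) :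
        (1:ℝ) ≤ 1 + c/u^2) (Real.exp_pos (-(f u)^2)).le]
  have hI2 : IntegrableOn (fun u : ℝ => (c/u^2) * Real.exp (-(f u)^2)) (Ioi 0) volume := by
    refine MeasureTheory.IntegrableOn.congr_fun (hint'.sub hI1) ?_ measurableSet_Ioi
    intro u hu; simp only [Pi.sub_apply]; ring
  -- A = B via substitution u ↦ c/u
  have key2 : ∫ x in (fun u : ℝ => c/u) '' Ioi 0, Real.exp (-(f x)^2)
      = ∫ u in Ioi (0:ℝ), |(-(c/u^2))| • Real.exp (-(f (c/u))^2) :=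
    integral_image_eq_integral_abs_deriv_smul measurableSet_Ioi hgd (inj_div c hc) _
  rw [image_div c hc] at key2
  have keyAB : ∫ u in Ioi (0:ℝ), Real.exp (-(f u)^2)
      = ∫ u in Ioi (0:ℝ), (c/u^2) * Real.exp (-(f u)^2) := by
    rw [key2]
    apply setIntegral_congr_fun measurableSet_Ioi
    intro u hu
    simp only [Set.mem_Ioi] at hu
    have hu' : u ≠ 0 := ne_of_gt hu
    have hfeq : f (c/u) = -(f u) := by
      have : c / (c/u) = u := by field_simp
      simp only [hf, this]; ring
    simp only [smul_eq_mul, abs_neg, hfeq, neg_sq]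
    rw [abs_of_pos (by positivity)]
  -- conclude A = √π / 2
  have hsplit : Real.sqrt Real.pi = (∫ u in Ioi (0:ℝ), Real.exp (-(f u)^2))
      + ∫ u in Ioi (0:ℝ), (c/u^2) * Real.exp (-(f u)^2) := by
    rw [key', ← integral_add hI1 hI2]
    apply setIntegral_congr_fun measurableSet_Ioi
    intro u hu; simp only; ring
  have hA : ∫ u in Ioi (0:ℝ), Real.exp (-(f u)^2) = Real.sqrt Real.pi / 2 := by
    rw [keyAB] at hsplit
    rw [keyAB]
    linarith
  -- relate to the original integrand
  have hcongr : ∀ u ∈ Ioi (0:ℝ), Real.exp (-(u^2 + c^2/u^2))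
      = Real.exp (-(2*c)) * Real.exp (-(f u)^2) := by
    intro u hu
    simp only [Set.mem_Ioi] at hu
    rw [← Real.exp_add]
    congr 1
    have hu' : u ≠ 0 := ne_of_gt hu
    simp only [hf]; field_simp
    ring
  constructor
  · refine MeasureTheory.IntegrableOn.congr_fun (hI1.const_mul (Real.exp (-(2*c)))) ?_
      measurableSet_Ioi
    intro u hu; exact (hcongr u hu).symm
  · rw [setIntegral_congr_fun measurableSet_Ioi hcongr, integral_const_mul, hA]
    ring



lemma aux_deriv_phi (k : ℝ) (u : ℝ) (hu : u ≠ 0) :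
    HasDerivAt (fun y : ℝ => k^2/(4*y^2)) (-(k^2/(2*u^3))) u := by
  have h1 : HasDerivAt (fun y : ℝ => y^2) (2*u) u := by
    simpa using hasDerivAt_pow 2 u
  have h2 := (h1.inv (pow_ne_zero 2 hu)).const_mul (k^2/4)
  have e1 : (fun y : ℝ => k^2/(4*y^2)) = fun y : ℝ => k^2/4 * (y^2)⁻¹ := by
    funext y; field_simp
  rw [e1]; refine h2.congr_deriv ?_
  field_simp
  ring

lemma image_phi (k : ℝ) (hk : 0 < k) :
    (fun u : ℝ => k^2/(4*u^2)) '' Ioi 0 = Ioi 0 := by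
  ext t
  simp only [Set.mem_image, Set.mem_Ioi]
  constructor
  · rintro ⟨u, hu, rfl⟩; positivity
  · intro ht
    refine ⟨k/(2*Real.sqrt t), by positivity, ?_⟩
    have hst : Real.sqrt t ^ 2 = t := Real.sq_sqrt ht.le
    have hst' : Real.sqrt t ≠ 0 := by positivity
    field_simp
    nlinarith [hst]

lemma inj_phi (k : ℝ) (hk : 0 < k) :
    Set.InjOn (fun u : ℝ => k^2/(4*u^2)) (Ioi 0) := by
  apply StrictAntiOn.injOn
  intro a ha b hb hab
  simp only [Set.mem_Ioi] at ha hb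
  simp only
  gcongr
  all_goals first
  | positivity
  | nlinarith

lemma laplace (k b : ℝ) (hk : 0 < k) (hb : 0 < b) :
    IntegrableOn (fun t : ℝ => t ^ (-(3:ℝ)/2) * Real.exp (-(k^2/(4*t)) - b^2*t)) (Ioi 0) volume ∧
    ∫ t in Ioi (0:ℝ), t ^ (-(3:ℝ)/2) * Real.exp (-(k^2/(4*t)) - b^2*t)
      = 2 * Real.sqrt Real.pi / k * Real.exp (-(k*b)) := by
  set c : ℝ := b*k/2 with hcdef
  have hc : 0 < c := by positivity
  set g : ℝ → ℝ := fun t => t ^ (-(3:ℝ)/2) * Real.exp (-(k^2/(4*t)) - b^2*t) with hg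
  have hphid : ∀ x ∈ Ioi (0:ℝ),
      HasDerivWithinAt (fun u : ℝ => k^2/(4*u^2)) (-(k^2/(2*x^3))) (Ioi 0) x :=
    fun x hx => (aux_deriv_phi k x (ne_of_gt hx)).hasDerivWithinAt
  -- pointwise identity for the substituted integrand
  have hpt : ∀ u ∈ Ioi (0:ℝ), |(-(k^2/(2*u^3)))| • g (k^2/(4*u^2))
      = (4/k) * Real.exp (-(u^2 + c^2/u^2)) := by
    intro u hu
    simp only [Set.mem_Ioi] at hu
    have hu' : u ≠ 0 := ne_of_gt hu
    have hx : (0:ℝ) < k/(2*u) := by positivity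
    have hrpow : (k^2/(4*u^2)) ^ (-(3:ℝ)/2) = 8*u^3/k^3 := by
      have h1 : k^2/(4*u^2) = (k/(2*u))^2 := by ring
      rw [h1, ← Real.rpow_natCast (k/(2*u)) 2, ← Real.rpow_mul hx.le,
        show ((2:ℕ):ℝ) * (-(3:ℝ)/2) = -(3:ℝ) by norm_num, Real.rpow_neg hx.le,
        show (3:ℝ) = ((3:ℕ):ℝ) by norm_num, Real.rpow_natCast]
      field_simp
      ring
    have hexp : -(k^2/(4*(k^2/(4*u^2)))) - b^2*(k^2/(4*u^2)) = -(u^2 + c^2/u^2) := by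
      rw [hcdef]; field_simp; ring
    rw [smul_eq_mul, abs_neg, abs_of_pos (by positivity)]
    simp only [hg, hrpow, hexp]
    field_simp
    ring
  have key : ∫ t in (fun u : ℝ => k^2/(4*u^2)) '' Ioi 0, g t
      = ∫ u in Ioi (0:ℝ), |(-(k^2/(2*u^3)))| • g (k^2/(4*u^2)) :=
    integral_image_eq_integral_abs_deriv_smul measurableSet_Ioi hphid (inj_phi k hk) g
  rw [image_phi k hk] at key
  constructor
  · have hsub : IntegrableOn (fun u : ℝ => |(-(k^2/(2*u^3)))| • g (k^2/(4*u^2))) (Ioi 0)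
        volume := by
      refine MeasureTheory.IntegrableOn.congr_fun ((glasser c hc).1.const_mul (4/k)) ?_
        measurableSet_Ioi
      intro u hu; exact (hpt u hu).symm
    have := (integrableOn_image_iff_integrableOn_abs_deriv_smul measurableSet_Ioi hphid
      (inj_phi k hk) g).mpr hsub
    rwa [image_phi k hk] at this
  · rw [key, setIntegral_congr_fun measurableSet_Ioi hpt, integral_const_mul,
      (glasser c hc).2, hcdef]
    rw [show 2*(b*k/2) = k*b by ring]
    field_simp
    ring

noncomputable def fermionicKernel (t a : ℝ) : ℝ :=
  (4 * Real.pi) ^ (-(1 : ℝ) / 2) * t ^ (-(3 : ℝ) / 2) *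
    ∑' k : ℕ, (-1 : ℝ) ^ k * ((k : ℝ) + 1) *
      Real.exp (-((k : ℝ) + 1) ^ 2 / (4 * t) + ((k : ℝ) + 1) * a)




noncomputable def Faux (β ω μ : ℝ) (k : ℕ) (t : ℝ) : ℝ :=
  (4 * Real.pi) ^ (-(1 : ℝ) / 2) * t ^ (-(3 : ℝ) / 2) *
    ((-1 : ℝ) ^ k * ((k : ℝ) + 1) *
      Real.exp (-((k : ℝ) + 1) ^ 2 / (4 * t) + ((k : ℝ) + 1) * (β * μ))) *
    Real.exp (-t * β ^ 2 * ω ^ 2)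

lemma hA_aux : (4 * Real.pi) ^ (-(1 : ℝ) / 2) * (2 * Real.sqrt Real.pi) = 1 := by
  have hpi := Real.pi_pos
  have h4 : (0:ℝ) < 4*Real.pi := by positivity
  have h1 : (4*Real.pi) ^ (-(1:ℝ)/2) = (Real.sqrt (4*Real.pi))⁻¹ := by
    rw [show (-(1:ℝ)/2) = -(1/2) by norm_num, Real.rpow_neg h4.le, ← Real.sqrt_eq_rpow]
  have h2 : Real.sqrt (4*Real.pi) = 2*Real.sqrt Real.pi := by
    rw [show (4:ℝ)*Real.pi = 2^2*Real.pi by norm_num, Real.sqrt_mul (by positivity),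
      Real.sqrt_sq (by norm_num : (0:ℝ) ≤ 2)]
  rw [h1, h2]
  have : (0:ℝ) < 2*Real.sqrt Real.pi := by positivity
  field_simp

lemma Faux_eq (β ω μ : ℝ) (k : ℕ) : Faux β ω μ k =
    fun t => ((4 * Real.pi) ^ (-(1:ℝ)/2) * (-1:ℝ)^k * ((k:ℝ)+1) *
      Real.exp (((k:ℝ)+1)*(β*μ))) *
      (t ^ (-(3:ℝ)/2) * Real.exp (-(((k:ℝ)+1)^2/(4*t)) - (β*ω)^2*t)) := by
  funext t
  have h1 : Real.exp (-((k:ℝ)+1)^2/(4*t) + ((k:ℝ)+1)*(β*μ)) * Real.exp (-t*β^2*ω^2)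
      = Real.exp (((k:ℝ)+1)*(β*μ)) * Real.exp (-(((k:ℝ)+1)^2/(4*t)) - (β*ω)^2*t) := by
    rw [← Real.exp_add, ← Real.exp_add]; ring_nf
  simp only [Faux]
  linear_combination ((4*Real.pi) ^ (-(1:ℝ)/2) * t ^ (-(3:ℝ)/2) * (-1:ℝ)^k * ((k:ℝ)+1)) * h1

section Main
variable (β ω μ : ℝ) (hβ : 0 < β) (hω : 0 < ω) (hμ : μ < ω)

lemma Faux_int (k : ℕ) (hβ : 0 < β) (hω : 0 < ω) :
    IntegrableOn (Faux β ω μ k) (Ioi 0) volume := by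
  rw [Faux_eq]
  exact ((laplace ((k:ℝ)+1) (β*ω) (by positivity) (by positivity)).1.const_mul _)

lemma Faux_val (k : ℕ) (hβ : 0 < β) (hω : 0 < ω) :
    ∫ t in Ioi (0:ℝ), Faux β ω μ k t
      = (-1:ℝ)^k * Real.exp (-(((k:ℝ)+1)*(β*(ω-μ)))) := by
  rw [Faux_eq, integral_const_mul,
    (laplace ((k:ℝ)+1) (β*ω) (by positivity) (by positivity)).2]
  have hKne : ((k:ℝ)+1) ≠ 0 := by positivity
  have hexp : Real.exp (((k:ℝ)+1)*(β*μ)) * Real.exp (-(((k:ℝ)+1)*(β*ω)))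
      = Real.exp (-(((k:ℝ)+1)*(β*(ω-μ)))) := by
    rw [← Real.exp_add]; ring_nf
  have step : (4*Real.pi) ^ (-(1:ℝ)/2) * (-1:ℝ)^k * ((k:ℝ)+1) * Real.exp (((k:ℝ)+1)*(β*μ)) *
      (2*Real.sqrt Real.pi/((k:ℝ)+1) * Real.exp (-(((k:ℝ)+1)*(β*ω))))
      = ((4*Real.pi) ^ (-(1:ℝ)/2) * (2*Real.sqrt Real.pi)) * (((k:ℝ)+1)/((k:ℝ)+1)) *
        ((-1:ℝ)^k * (Real.exp (((k:ℝ)+1)*(β*μ)) * Real.exp (-(((k:ℝ)+1)*(β*ω))))) := by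
    ring
  rw [step, hA_aux, div_self hKne, hexp]
  ring

lemma Faux_norm (k : ℕ) (hβ : 0 < β) (hω : 0 < ω) :
    ∫ t in Ioi (0:ℝ), ‖Faux β ω μ k t‖
      = Real.exp (-(((k:ℝ)+1)*(β*(ω-μ)))) := by
  have hb : (0:ℝ) < β*ω := by positivity
  have hKpos : (0:ℝ) < (k:ℝ)+1 := by positivity
  have hApos : (0:ℝ) < (4*Real.pi) ^ (-(1:ℝ)/2) := by
    apply Real.rpow_pos_of_pos; positivity
  have hcongr : ∀ t ∈ Ioi (0:ℝ), ‖Faux β ω μ k t‖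
      = ((4*Real.pi) ^ (-(1:ℝ)/2) * ((k:ℝ)+1) * Real.exp (((k:ℝ)+1)*(β*μ))) *
        (t ^ (-(3:ℝ)/2) * Real.exp (-(((k:ℝ)+1)^2/(4*t)) - (β*ω)^2*t)) := by
    intro t ht
    simp only [Set.mem_Ioi] at ht
    rw [Faux_eq]
    simp only [Real.norm_eq_abs, abs_mul]
    rw [abs_of_pos hApos, abs_of_pos (Real.exp_pos _), abs_of_pos (Real.exp_pos _),
      abs_of_pos (Real.rpow_pos_of_pos ht _), abs_pow, abs_neg, abs_one, one_pow,
      abs_of_pos hKpos]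
    ring
  rw [setIntegral_congr_fun measurableSet_Ioi hcongr, integral_const_mul,
    (laplace ((k:ℝ)+1) (β*ω) hKpos hb).2]
  have hexp : Real.exp (((k:ℝ)+1)*(β*μ)) * Real.exp (-(((k:ℝ)+1)*(β*ω)))
      = Real.exp (-(((k:ℝ)+1)*(β*(ω-μ)))) := by
    rw [← Real.exp_add]; ring_nf
  have step : (4*Real.pi) ^ (-(1:ℝ)/2) * ((k:ℝ)+1) * Real.exp (((k:ℝ)+1)*(β*μ)) *
      (2*Real.sqrt Real.pi/((k:ℝ)+1) * Real.exp (-(((k:ℝ)+1)*(β*ω))))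
      = ((4*Real.pi) ^ (-(1:ℝ)/2) * (2*Real.sqrt Real.pi)) * (((k:ℝ)+1)/((k:ℝ)+1)) *
        (Real.exp (((k:ℝ)+1)*(β*μ)) * Real.exp (-(((k:ℝ)+1)*(β*ω)))) := by
    ring
  rw [step, hA_aux, div_self (ne_of_gt hKpos), hexp]
  ring

lemma geom_sum (c : ℝ) (hc : 0 < c) :
    ∑' k : ℕ, (-1:ℝ)^k * Real.exp (-(((k:ℝ)+1)*c)) = 1/(Real.exp c + 1) := by
  have h : ∀ k : ℕ, (-1:ℝ)^k * Real.exp (-(((k:ℝ)+1)*c))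
      = (-(Real.exp (-c)))^k * Real.exp (-c) := by
    intro k
    rw [show ((-(Real.exp (-c)))^k : ℝ) = (-1)^k * (Real.exp (-c))^k from by rw [neg_pow],
      ← Real.exp_nat_mul, mul_assoc, ← Real.exp_add]
    congr 1
    push_cast
    ring
  rw [tsum_congr h, tsum_mul_right, tsum_geometric_of_norm_lt_one (by
    rw [norm_neg, Real.norm_eq_abs, abs_of_pos (Real.exp_pos _)]
    exact Real.exp_lt_one_iff.mpr (by linarith))]
  have hx := Real.exp_pos c
  rw [sub_neg_eq_add, Real.exp_neg, eq_div_iff (by positivity)]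
  field_simp

lemma kernel_tsum (t : ℝ) : (∑' k : ℕ, Faux β ω μ k t)
    = fermionicKernel t (β*μ) * Real.exp (-t*β^2*ω^2) := by
  rw [fermionicKernel]
  rw [show (∑' k : ℕ, Faux β ω μ k t) = (∑' k : ℕ,
    ((4*Real.pi) ^ (-(1:ℝ)/2) * t ^ (-(3:ℝ)/2)) *
      ((-1:ℝ)^k * ((k:ℝ)+1) * Real.exp (-((k:ℝ)+1)^2/(4*t) + ((k:ℝ)+1)*(β*μ))) *
      Real.exp (-t*β^2*ω^2)) from tsum_congr (fun k => by simp only [Faux])]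
  rw [tsum_mul_right, tsum_mul_left]

end Main

/-- The Fermi–Dirac occupation number as a subordinated integral:
for `β > 0`, `ω > 0`, `μ < ω`,
`1/(e^{β(ω−μ)} + 1) = ∫₀^∞ h_f(t, βμ) e^{−tβ²ω²} dt`. -/
theorem fermi_dirac_occupation_subordination (β ω μ : ℝ) (hβ : 0 < β) (hω : 0 < ω)
    (hμ : μ < ω) :
    1 / (Real.exp (β * (ω - μ)) + 1)
      = ∫ t in Set.Ioi (0 : ℝ), fermionicKernel t (β * μ) * Real.exp (-t * β ^ 2 * ω ^ 2) := by
  have hc : 0 < β*(ω-μ) := by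
    apply mul_pos hβ; linarith
  have hsum : Summable (fun k : ℕ => ∫ t in Ioi (0:ℝ), ‖Faux β ω μ k t‖) := by
    have hr1 : Real.exp (-(β*(ω-μ))) < 1 := Real.exp_lt_one_iff.mpr (by linarith)
    have hgeom : Summable (fun k : ℕ => Real.exp (-(β*(ω-μ))) * Real.exp (-(β*(ω-μ)))^k) :=
      (summable_geometric_of_lt_one (Real.exp_pos _).le hr1).mul_left _
    apply hgeom.congr
    intro k
    rw [Faux_norm β ω μ k hβ hω, ← Real.exp_nat_mul, ← Real.exp_add]
    congr 1
    push_cast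
    ring
  calc 1 / (Real.exp (β * (ω - μ)) + 1)
      = ∑' k : ℕ, (-1:ℝ)^k * Real.exp (-(((k:ℝ)+1)*(β*(ω-μ)))) := (geom_sum _ hc).symm
    _ = ∑' k : ℕ, ∫ t in Ioi (0:ℝ), Faux β ω μ k t :=
        tsum_congr (fun k => (Faux_val β ω μ k hβ hω).symm)
    _ = ∫ t in Ioi (0:ℝ), ∑' k : ℕ, Faux β ω μ k t :=
        integral_tsum_of_summable_integral_norm (fun k => Faux_int β ω μ k hβ hω) hsum
    _ = ∫ t in Set.Ioi (0:ℝ), fermionicKernel t (β * μ) * Real.exp (-t * β ^ 2 * ω ^ 2) := by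
        apply setIntegral_congr_fun measurableSet_Ioi
        intro t ht
        exact kernel_tsum β ω μ t
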